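/- arXiv:2403.16549 — 4 statements merged into one kernel-verified Lean document; each statement's English description precedes it below -/
import Mathlib

section
/- Let F : ℝ → ℝ be continuous with F(x+1)=F(x)+1 for all x, and suppose F_ℓ(x₀) ≠ F(x₀) for some x₀ ∈ ℝ, where F_ℓ(x) = inf { F(y) : y ≥ x }. Then there is an open interval containing x₀ on which F_ℓ is constant. -/
/-- If `F_ℓ(x₀) ≠ F(x₀)` for a lifting `F` of a degree one circle map, then
`x₀` lies in an open interval on which `F_ℓ` is constant. -/
theorem stmt5 (F : ℝ → ℝ) (hF : Continuous F)
    (hdeg : ∀ x : ℝ, F (x + 1) = F x + 1)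
    (x₀ : ℝ) (hne : sInf (F '' Set.Ici x₀) ≠ F x₀) :
    ∃ a b : ℝ, a < x₀ ∧ x₀ < b ∧
      ∀ y ∈ Set.Ioo a b, sInf (F '' Set.Ici y) = sInf (F '' Set.Ici x₀) := by
  set g : ℝ → ℝ := fun z => F z - z with hg
  have hper : Function.Periodic g 1 := by
    intro x; simp only [hg, hdeg x]; ring
  have hgc : Continuous g := hF.sub continuous_id
  obtain ⟨t0, -, ht0⟩ := isCompact_Icc.exists_isMinOn (Set.nonempty_Icc.2 zero_le_one)
    (hgc.continuousOn (s := Set.Icc (0:ℝ) 1))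
  have hB : ∀ z : ℝ, g t0 ≤ g z := by
    intro z
    have h1 : g z = g (Int.fract z) := by
      have h2 := hper.sub_int_mul_eq (x := z) ⌊z⌋
      rw [mul_one] at h2
      rw [Int.fract]
      exact h2.symm
    rw [h1]
    exact ht0 ⟨Int.fract_nonneg z, (Int.fract_lt_one z).le⟩
  set B := g t0 with hBdef
  have hlow : ∀ z : ℝ, z + B ≤ F z := by
    intro z
    have := hB z; simp only [hg] at this; linarith
  have hbdd : ∀ y : ℝ, BddBelow (F '' Set.Ici y) := by
    intro y
    refine ⟨y + B, ?_⟩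
    rintro _ ⟨z, hz, rfl⟩
    have := hlow z
    have := Set.mem_Ici.1 hz
    linarith
  set K : ℝ := max (x₀ + 1) (F x₀ - B + 1) with hKdef
  have hK1 : x₀ ≤ K := le_trans (by linarith) (le_max_left _ _)
  obtain ⟨ystar, hymem, hymin⟩ := isCompact_Icc.exists_isMinOn (Set.nonempty_Icc.2 hK1)
    (hF.continuousOn (s := Set.Icc x₀ K))
  have hystar_le : F ystar ≤ F x₀ := hymin ⟨le_refl x₀, hK1⟩
  have hinf_eq : sInf (F '' Set.Ici x₀) = F ystar := by
    apply le_antisymm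
    · exact csInf_le (hbdd x₀) ⟨ystar, hymem.1, rfl⟩
    · refine le_csInf ⟨F x₀, x₀, Set.self_mem_Ici, rfl⟩ ?_
      rintro _ ⟨z, hz, rfl⟩
      by_cases hzK : z ≤ K
      · exact hymin ⟨hz, hzK⟩
      · have h2 : F x₀ - B + 1 ≤ K := le_max_right _ _
        have h3 := hlow z
        push_neg at hzK
        linarith
  set c := F ystar with hcdef
  have hclt : c < F x₀ := lt_of_le_of_ne hystar_le (fun h => hne (hinf_eq.trans h))
  have hopen : IsOpen {z : ℝ | c < F z} := isOpen_lt continuous_const hF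
  obtain ⟨δ, hδ, hball⟩ := Metric.isOpen_iff.1 hopen x₀ hclt
  have hyge : x₀ + δ ≤ ystar := by
    by_contra h
    push_neg at h
    have hmem : ystar ∈ Metric.ball x₀ δ := by
      rw [Metric.mem_ball, Real.dist_eq, abs_lt]
      have := hymem.1
      constructor <;> linarith
    exact lt_irrefl c (hball hmem)
  refine ⟨x₀ - δ, x₀ + δ, by linarith, by linarith, ?_⟩
  rintro y ⟨hy1, hy2⟩
  rw [hinf_eq]
  apply le_antisymm
  · exact csInf_le (hbdd y) ⟨ystar, le_trans hy2.le hyge, rfl⟩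
  · refine le_csInf ⟨F y, y, Set.self_mem_Ici, rfl⟩ ?_
    rintro _ ⟨z, hz, rfl⟩
    rcases le_or_gt x₀ z with h | h
    · calc c = sInf (F '' Set.Ici x₀) := hinf_eq.symm
        _ ≤ F z := csInf_le (hbdd x₀) ⟨z, h, rfl⟩
    · have hmem : z ∈ Metric.ball x₀ δ := by
        rw [Metric.mem_ball, Real.dist_eq, abs_lt]
        have := Set.mem_Ici.1 hz
        constructor <;> linarith
      exact (hball hmem).le
end

section
/- Let f : I → I be a continuous map of a compact interval, and let I₀, I₁, …, I_{k-1} be closed subintervals of I such that f(I_j) ⊇ I_{j+1} for 0 ≤ j ≤ k-2 and f(I_{k-1}) ⊇ I₀. Then there exists a point x ∈ I₀ with f^j(x) ∈ I_j for 0 ≤ j ≤ k-1 and f^k(x) = x. -/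
open Set

private lemma stmt10.core (f : ℝ → ℝ) (x y p q : ℝ) (hxy : x ≤ y) (hpq : p ≤ q)
    (hf : ContinuousOn f (Icc x y)) (hfx : f x = p) (hfy : f y = q) :
    ∃ c d, x ≤ c ∧ c ≤ d ∧ d ≤ y ∧ f '' Icc c d = Icc p q := by
  set A : Set ℝ := Icc x y ∩ f ⁻¹' {p} with hA
  have hAne : A.Nonempty := ⟨x, ⟨le_refl x, hxy⟩, hfx⟩
  have hAclosed : IsClosed A := hf.preimage_isClosed_of_isClosed isClosed_Icc isClosed_singleton
  have hAbdd : BddAbove A := BddAbove.mono (inter_subset_left) (bddAbove_Icc)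
  set c := sSup A with hc
  have hcA : c ∈ A := hAclosed.csSup_mem hAne hAbdd
  have hfc : f c = p := hcA.2
  have hcx : x ≤ c := hcA.1.1
  have hcy : c ≤ y := hcA.1.2
  set B : Set ℝ := Icc c y ∩ f ⁻¹' {q} with hB
  have hBne : B.Nonempty := ⟨y, ⟨hcy, le_refl y⟩, hfy⟩
  have hBclosed : IsClosed B :=
    (hf.mono (Icc_subset_Icc hcx le_rfl)).preimage_isClosed_of_isClosed isClosed_Icc
      isClosed_singleton
  have hBbdd : BddBelow B := BddBelow.mono (inter_subset_left) (bddBelow_Icc)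
  set d := sInf B with hd
  have hdB : d ∈ B := hBclosed.csInf_mem hBne hBbdd
  have hfd : f d = q := hdB.2
  have hcd : c ≤ d := hdB.1.1
  have hdy : d ≤ y := hdB.1.2
  refine ⟨c, d, hcx, hcd, hdy, ?_⟩
  have hsubcd : Icc c d ⊆ Icc x y := Icc_subset_Icc hcx hdy
  have hfcd : ContinuousOn f (Icc c d) := hf.mono hsubcd
  apply subset_antisymm
  · rintro _ ⟨t, ht, rfl⟩
    by_contra hout
    rw [mem_Icc, not_and_or, not_le, not_le] at hout
    rcases hout with hlt | hgt
    · -- f t < p; t > c since f c = p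
      have htc : c < t := by
        rcases lt_or_eq_of_le ht.1 with h | h
        · exact h
        · exact absurd hfc (by rw [h]; linarith)
      -- IVT on [t, d] gives s with f s = p
      have : p ∈ Icc (f t) (f d) := ⟨le_of_lt hlt, by rw [hfd]; exact hpq⟩
      obtain ⟨s, hs, hfs⟩ := intermediate_value_Icc ht.2 (hfcd.mono (Icc_subset_Icc ht.1 le_rfl)) this
      have hsA : s ∈ A := ⟨⟨le_trans hcx (le_trans (le_of_lt htc) hs.1),
        le_trans hs.2 hdy⟩, hfs⟩
      have : s ≤ c := le_csSup hAbdd hsA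
      linarith [hs.1]
    · -- f t > q; t < d since f d = q
      have htd : t < d := by
        rcases lt_or_eq_of_le ht.2 with h | h
        · exact h
        · exact absurd hfd (by rw [← h]; linarith)
      have : q ∈ Icc (f c) (f t) := ⟨by rw [hfc]; exact hpq, le_of_lt hgt⟩
      obtain ⟨s, hs, hfs⟩ := intermediate_value_Icc ht.1 (hfcd.mono (Icc_subset_Icc le_rfl ht.2)) this
      have hsB : s ∈ B := ⟨⟨hs.1, le_trans hs.2 (le_trans ht.2 hdy)⟩, hfs⟩
      have : d ≤ s := csInf_le hBbdd hsB
      linarith [hs.2]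
  · have := intermediate_value_Icc hcd hfcd
    rw [hfc, hfd] at this
    exact this

private lemma stmt10.onto_sub (f : ℝ → ℝ) (x y p q : ℝ) (hxy : x ≤ y) (hpq : p ≤ q)
    (hf : ContinuousOn f (Icc x y)) (hcov : Icc p q ⊆ f '' Icc x y) :
    ∃ c d, x ≤ c ∧ c ≤ d ∧ d ≤ y ∧ f '' Icc c d = Icc p q := by
  obtain ⟨s, hs, hfs⟩ := hcov (left_mem_Icc.2 hpq)
  obtain ⟨t, ht, hft⟩ := hcov (right_mem_Icc.2 hpq)
  rcases le_total s t with hst | hts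
  · obtain ⟨c, d, h1, h2, h3, h4⟩ := stmt10.core f s t p q hst hpq
      (hf.mono (Icc_subset_Icc hs.1 ht.2)) hfs hft
    exact ⟨c, d, le_trans hs.1 h1, h2, le_trans h3 ht.2, h4⟩
  · -- f t = q at left, f s = p at right; reflect
    set g : ℝ → ℝ := fun z => f (t + s - z) with hg
    have hrefl : ContinuousOn (fun z : ℝ => t + s - z) (Icc t s) := by fun_prop
    have hmap : MapsTo (fun z : ℝ => t + s - z) (Icc t s) (Icc t s) := by
      intro z hz; simp only [mem_Icc] at *; constructor <;> linarith [hz.1, hz.2]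
    have hgc : ContinuousOn g (Icc t s) :=
      (hf.mono (Icc_subset_Icc ht.1 hs.2)).comp hrefl hmap
    have hgt : g t = p := by simp [hg, hfs]
    have hgs : g s = q := by simp [hg, hft]
    obtain ⟨c, d, h1, h2, h3, h4⟩ := stmt10.core g t s p q hts hpq hgc hgt hgs
    refine ⟨t + s - d, t + s - c, by linarith [ht.1, hs.2], by linarith, by linarith [ht.1, hs.2], ?_⟩
    have himg : (fun z : ℝ => t + s - z) '' Icc c d = Icc (t + s - d) (t + s - c) := by
      rw [show (fun z : ℝ => t + s - z) = (fun z => (t + s) - z) from rfl,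
        Set.image_const_sub_Icc]
    rw [← himg, ← image_comp] at *
    exact h4

private lemma stmt10.chain_lemma (f : ℝ → ℝ) :
    ∀ n, 0 < n → ∀ (u v : ℕ → ℝ) (p q : ℝ),
    (∀ j < n, u j ≤ v j) →
    (∀ j < n, ContinuousOn f (Icc (u j) (v j))) →
    (∀ j, j + 1 < n → Icc (u (j + 1)) (v (j + 1)) ⊆ f '' Icc (u j) (v j)) →
    p ≤ q → Icc p q ⊆ f '' Icc (u (n - 1)) (v (n - 1)) →
    ∃ c d, u 0 ≤ c ∧ c ≤ d ∧ d ≤ v 0 ∧ f^[n] '' Icc c d = Icc p q ∧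
      ∀ j < n, f^[j] '' Icc c d ⊆ Icc (u j) (v j) := by
  intro n
  induction n with
  | zero => intro h; exact absurd h (lt_irrefl 0)
  | succ m ih =>
    intro _ u v p q huv hcont hchain hpq hcov
    rcases Nat.eq_zero_or_pos m with rfl | hm
    · -- base case n = 1
      obtain ⟨c, d, h1, h2, h3, h4⟩ := stmt10.onto_sub f (u 0) (v 0) p q
        (huv 0 Nat.one_pos) hpq (hcont 0 Nat.one_pos) (by simpa using hcov)
      refine ⟨c, d, h1, h2, h3, by simpa using h4, ?_⟩
      intro j hj
      interval_cases j
      simpa using Icc_subset_Icc h1 h3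
    · -- inductive step, n = m + 1, m ≥ 1
      have hm1 : m - 1 + 1 = m := Nat.succ_pred_eq_of_pos hm
      -- sub-interval of I_m mapping onto [p,q]
      have : (m + 1) - 1 = m := rfl
      obtain ⟨c', d', h1', h2', h3', h4'⟩ := stmt10.onto_sub f (u m) (v m) p q
        (huv m (Nat.lt_succ_self m)) hpq (hcont m (Nat.lt_succ_self m)) (by simpa using hcov)
      -- [c',d'] ⊆ I_m ⊆ f '' I_{m-1}
      have hcov' : Icc c' d' ⊆ f '' Icc (u (m - 1)) (v (m - 1)) := by
        refine subset_trans (Icc_subset_Icc h1' h3') ?_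
        have := hchain (m - 1) (by omega)
        rwa [hm1] at this
      obtain ⟨c, d, h1, h2, h3, h4, h5⟩ := ih hm u v c' d'
        (fun j hj => huv j (Nat.lt_succ_of_lt hj))
        (fun j hj => hcont j (Nat.lt_succ_of_lt hj))
        (fun j hj => hchain j (Nat.lt_succ_of_lt hj)) h2' hcov'
      refine ⟨c, d, h1, h2, h3, ?_, ?_⟩
      · rw [Function.iterate_succ', Set.image_comp, h4, h4']
      · intro j hj
        rcases Nat.lt_succ_iff_lt_or_eq.mp hj with h | rfl
        · exact h5 j h
        · rw [h4]; exact Icc_subset_Icc h1' h3'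


/-- Loop-of-intervals lemma: if closed subintervals `I₀, …, I_{k-1}` of a
compact invariant interval satisfy `f(I_j) ⊇ I_{j+1}` for `j ≤ k-2` and
`f(I_{k-1}) ⊇ I₀`, then there is a point `x ∈ I₀` following the loop with
`f^[k] x = x`. -/
theorem stmt10 (a b : ℝ) (hab : a ≤ b) (f : ℝ → ℝ)
    (hf : ContinuousOn f (Set.Icc a b))
    (hmaps : Set.MapsTo f (Set.Icc a b) (Set.Icc a b))
    (k : ℕ) (hk : 0 < k) (u v : ℕ → ℝ)
    (huv : ∀ j < k, u j ≤ v j)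
    (hsub : ∀ j < k, Set.Icc (u j) (v j) ⊆ Set.Icc a b)
    (hchain : ∀ j, j + 1 < k →
      Set.Icc (u (j + 1)) (v (j + 1)) ⊆ f '' Set.Icc (u j) (v j))
    (hloop : Set.Icc (u 0) (v 0) ⊆ f '' Set.Icc (u (k - 1)) (v (k - 1))) :
    ∃ x ∈ Set.Icc (u 0) (v 0),
      (∀ j < k, f^[j] x ∈ Set.Icc (u j) (v j)) ∧ f^[k] x = x := by
  have hiter : ∀ n, ContinuousOn f^[n] (Icc a b) := by
    intro n
    induction n with
    | zero => simpa using continuousOn_id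
    | succ m ih =>
      rw [Function.iterate_succ']
      exact hf.comp ih (hmaps.iterate m)
  obtain ⟨c, d, h1, h2, h3, h4, h5⟩ := stmt10.chain_lemma f k hk u v (u 0) (v 0) huv
    (fun j hj => hf.mono (hsub j hj)) hchain (huv 0 hk) hloop
  have hcdab : Icc c d ⊆ Icc a b := subset_trans (Icc_subset_Icc h1 h3) (hsub 0 hk)
  obtain ⟨p', hp', hfp'⟩ : u 0 ∈ f^[k] '' Icc c d := h4 ▸ left_mem_Icc.2 (huv 0 hk)
  obtain ⟨q', hq', hfq'⟩ : v 0 ∈ f^[k] '' Icc c d := h4 ▸ right_mem_Icc.2 (huv 0 hk)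
  set g : ℝ → ℝ := fun z => f^[k] z - z with hg
  have hgc : ContinuousOn g (uIcc p' q') := by
    apply ContinuousOn.sub
    · exact (hiter k).mono (subset_trans (uIcc_subset_Icc hp' hq') hcdab)
    · exact continuousOn_id
  have h0 : (0 : ℝ) ∈ uIcc (g p') (g q') := by
    have : g p' ≤ 0 := by simp only [hg, hfp']; linarith [hp'.1]
    have : g q' ≥ 0 := by simp only [hg, hfq']; linarith [hq'.2]
    rcases le_total (g p') (g q') with h | h
    · rw [uIcc_of_le h, mem_Icc]; constructor <;> assumption
    · rw [uIcc_of_ge h, mem_Icc]; constructor <;> linarith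
  obtain ⟨x, hx, hgx⟩ := intermediate_value_uIcc hgc h0
  have hxcd : x ∈ Icc c d := uIcc_subset_Icc hp' hq' hx
  have hfix : f^[k] x = x := by
    have : f^[k] x - x = 0 := hgx
    linarith
  exact ⟨x, Icc_subset_Icc h1 h3 hxcd,
    fun j hj => h5 j hj (mem_image_of_mem _ hxcd), hfix⟩
end

section
/- Let f : [0,1] → [0,1] be continuous, and suppose there exist points x < y < z in [0,1] with f(x) < x, f(y) ≥ z, and f(z) ≤ x (f has a divergent cycle configuration). Then for every pair of positive integers p, q with q ≥ 3p + 3, f has a periodic point of period dividing q whose orbit under the associated interval loop makes exactly p passes through the block L → J → K₁ (in particular, f has periodic points of all periods n ≥ 2). -/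
/-!
Every covering relation `SurjOn f I K` between compact intervals can be refined to a
subinterval `I' ⊆ I` with `f '' I' = K`. Pulling a closed cycle of covering relations back
step by step therefore yields a compact interval mapped by `f^[n]` onto the first interval of the
cycle, which contains it; it has a fixed point, whose orbit follows the cycle. The divergent
configuration provides the intervals `J = [a, c]`, `K₁ = [c, y]`, `K₂ = [y, b]`, `L = [b, z]`
with `J, L → J ∪ K₁ ∪ K₂` and `K₁, K₂ → L`; the cycles `J^(q-3p-3) K₂ (L J K₁)^p L J` and
`K₁ L J^(n-2)` give the two parts of the theorem, the latter with exact period `n` because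
`L` meets no other interval of its cycle.
-/

open Set Function

section IntervalCovering

variable {f : ℝ → ℝ}

theorem exists_Icc_image_eq_of_le {s t u v : ℝ} (hf : ContinuousOn f (Icc s t)) (hst : s ≤ t)
    (huv : u ≤ v) (hs : f s = u) (ht : f t = v) :
    ∃ α β, α ≤ β ∧ Icc α β ⊆ Icc s t ∧ f '' Icc α β = Icc u v := by
  -- `β` is the first point of `[s, t]` where `f = v`, `α` the last point of `[s, β]` where `f = u`
  obtain ⟨β, ⟨hβ, hfβ⟩, hβ_min⟩ : ∃ β, IsLeast (Icc s t ∩ f ⁻¹' {v}) β :=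
    (isCompact_Icc.of_isClosed_subset (hf.preimage_isClosed_of_isClosed isClosed_Icc
      isClosed_singleton) inter_subset_left).exists_isLeast ⟨t, right_mem_Icc.2 hst, ht⟩
  have hfβ' : ContinuousOn f (Icc s β) := hf.mono (Icc_subset_Icc_right hβ.2)
  obtain ⟨α, ⟨hα, hfα⟩, hα_max⟩ : ∃ α, IsGreatest (Icc s β ∩ f ⁻¹' {u}) α :=
    (isCompact_Icc.of_isClosed_subset (hfβ'.preimage_isClosed_of_isClosed isClosed_Icc
      isClosed_singleton) inter_subset_left).exists_isGreatest ⟨s, left_mem_Icc.2 hβ.1, hs⟩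
  have hfβ : f β = v := hfβ
  have hfα : f α = u := hfα
  have hsub : Icc α β ⊆ Icc s t := Icc_subset_Icc hα.1 hβ.2
  refine ⟨α, β, hα.2, hsub, Subset.antisymm ?_ ?_⟩
  · rintro _ ⟨w, hw, rfl⟩
    constructor
    · by_contra! hlt
      obtain ⟨w', hw', hfw'⟩ := intermediate_value_Icc hw.2
        (hf.mono ((Icc_subset_Icc_left hw.1).trans hsub)) ⟨hlt.le, hfβ ▸ huv⟩
      have : w' ≤ α := hα_max ⟨⟨hα.1.trans (hw.1.trans hw'.1), hw'.2⟩, hfw'⟩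
      obtain rfl : w' = w := le_antisymm (this.trans hw.1) hw'.1
      exact hlt.ne hfw'
    · by_contra! hlt
      obtain ⟨w', hw', hfw'⟩ := intermediate_value_Icc hw.1
        (hf.mono ((Icc_subset_Icc_right hw.2).trans hsub)) ⟨hfα ▸ huv, hlt.le⟩
      have : β ≤ w' := hβ_min ⟨⟨hα.1.trans hw'.1, hw'.2.trans (hw.2.trans hβ.2)⟩, hfw'⟩
      obtain rfl : w' = w := le_antisymm hw'.2 (hw.2.trans this)
      exact hlt.ne' hfw'
  · simpa only [hfα, hfβ] using intermediate_value_Icc hα.2 (hf.mono hsub)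

theorem exists_Icc_subset_image_eq {s : Set ℝ} (hs : s.OrdConnected) (hf : ContinuousOn f s)
    {u v : ℝ} (huv : u ≤ v) (h : SurjOn f s (Icc u v)) :
    ∃ α β, α ≤ β ∧ Icc α β ⊆ s ∧ f '' Icc α β = Icc u v := by
  obtain ⟨p, hp, hfp⟩ := h (left_mem_Icc.2 huv)
  obtain ⟨q, hq, hfq⟩ := h (right_mem_Icc.2 huv)
  rcases le_total p q with hpq | hqp
  · obtain ⟨α, β, hαβ, hsub, himage⟩ := exists_Icc_image_eq_of_le (hf.mono (hs.out hp hq)) hpq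
      huv hfp hfq
    exact ⟨α, β, hαβ, hsub.trans (hs.out hp hq), himage⟩
  · obtain ⟨α, β, hαβ, hsub, himage⟩ := exists_Icc_image_eq_of_le (f := fun x ↦ -f x)
      (hf.mono (hs.out hq hp)).neg hqp (neg_le_neg huv) (by rw [hfq]) (by rw [hfp])
    refine ⟨α, β, hαβ, hsub.trans (hs.out hq hp), ?_⟩
    rw [← neg_neg u, ← neg_neg v, ← neg_Icc, ← himage, ← image_neg_eq_neg, image_image]
    simp only [neg_neg]

theorem exists_Icc_image_iterate_eq (hf : Continuous f) {n : ℕ} {I : ℕ → Set ℝ}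
    (hI : ∀ i < n, (I i).OrdConnected) (hcov : ∀ i < n, SurjOn f (I i) (I (i + 1)))
    {u v : ℝ} (huv : u ≤ v) (hn : Icc u v ⊆ I n) :
    ∃ α β, α ≤ β ∧ f^[n] '' Icc α β = Icc u v ∧ ∀ j ≤ n, MapsTo f^[j] (Icc α β) (I j) := by
  induction n generalizing I with
  | zero =>
    refine ⟨u, v, huv, by rw [iterate_zero, image_id], fun j hj ↦ ?_⟩
    obtain rfl := Nat.le_zero.1 hj
    exact hn
  | succ n ih =>
    obtain ⟨α₁, β₁, hαβ₁, himage₁, hmaps₁⟩ := ih (I := fun i ↦ I (i + 1))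
      (fun i hi ↦ hI _ (by omega)) (fun i hi ↦ hcov _ (by omega)) hn
    obtain ⟨α, β, hαβ, hsub, himage⟩ := exists_Icc_subset_image_eq (hI 0 n.succ_pos)
      hf.continuousOn hαβ₁ ((hcov 0 n.succ_pos).mono subset_rfl (hmaps₁ 0 n.zero_le))
    refine ⟨α, β, hαβ, by rw [iterate_succ, image_comp, himage, himage₁], ?_⟩
    rintro (_ | j) hj
    · exact hsub
    · rw [iterate_succ]
      exact (hmaps₁ j (by omega)).comp (himage ▸ mapsTo_image f _)

theorem exists_isPeriodicPt_of_surjOn_cycle (hf : Continuous f) {n : ℕ} {I : ℕ → Set ℝ}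
    (hI : ∀ i, ∃ u v, u ≤ v ∧ I i = Icc u v)
    (hcov : ∀ i < n, SurjOn f (I i) (I ((i + 1) % n))) :
    ∃ w, IsPeriodicPt f n w ∧ ∀ i < n, f^[i] w ∈ I i := by
  have hconn (i : ℕ) : (I i).OrdConnected := by
    obtain ⟨u, v, -, h⟩ := hI i
    exact h ▸ ordConnected_Icc
  have hmod : ∀ i < n, I (i % n) = I i := fun i hi ↦ by rw [Nat.mod_eq_of_lt hi]
  obtain ⟨u, v, huv, hI₀⟩ := hI 0
  obtain ⟨α, β, hαβ, himage, hmaps⟩ := exists_Icc_image_iterate_eq hf (I := fun i ↦ I (i % n))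
    (fun i _ ↦ hconn _) (fun i hi ↦ by simpa only [hmod i hi] using hcov i hi) huv
    (by rw [Nat.mod_self, hI₀])
  have hsub : Icc α β ⊆ Icc u v := fun w hw ↦ by simpa [hI₀] using hmaps 0 n.zero_le hw
  obtain ⟨w, hw, hfix⟩ := exists_mem_Icc_isFixedPt_of_surjOn (hf.iterate n).continuousOn hαβ
    (by rwa [SurjOn, himage])
  exact ⟨w, hfix, fun i hi ↦ by simpa only [hmod i hi] using hmaps i hi.le hw⟩

theorem surjOn_Icc_of_subset_uIcc {s t u v : ℝ} (hf : ContinuousOn f (Icc s t)) (hst : s ≤ t)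
    (h : Icc u v ⊆ uIcc (f s) (f t)) : SurjOn f (Icc s t) (Icc u v) :=
  (hf.surjOn_uIcc (left_mem_Icc.2 hst) (right_mem_Icc.2 hst)).mono subset_rfl h

end IntervalCovering

theorem iterate_ne_self_of_itinerary {α : Type*} {f : α → α} {n m : ℕ} {I : ℕ → Set α} {w : α}
    (hw : f^[n] w = w) (hit : ∀ i < n, f^[i] w ∈ I i)
    (hdisj : ∀ i < n, i ≠ 1 → Disjoint (I 1) (I i)) (hm : 0 < m) (hmn : m < n) :
    f^[m] w ≠ w := by
  intro hmw
  have hsucc : f^[m + 1] w = f w := by rw [iterate_succ_apply', hmw]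
  have h₁ : f w ∈ I 1 := hit 1 (by omega)
  obtain hlt | heq : m + 1 < n ∨ m + 1 = n := by omega
  · exact disjoint_left.1 (hdisj _ hlt (by omega)) h₁ (hsucc ▸ hit _ hlt)
  · have hfw : f w = w := by rw [← hsucc, heq, hw]
    rw [hfw] at h₁
    exact disjoint_left.1 (hdisj 0 (by omega) zero_ne_one) h₁ (hit 0 (by omega))

theorem Nat.add_one_mod_of_lt {i n : ℕ} (hi : i < n) :
    (i + 1) % n = if i + 1 = n then 0 else i + 1 := by
  split_ifs with h
  · rw [h, Nat.mod_self]
  · exact Nat.mod_eq_of_lt (by omega)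

section PassLoop

variable {α : Type*} (J K₁ K₂ L : Set α) (p q : ℕ)

/-- The cycle `J^(q-3p-3) K₂ (L J K₁)^p L J` of length `q`. -/
def passLoop (i : ℕ) : Set α :=
  if i < q - 3 * p - 3 then J
  else if i = q - 3 * p - 3 then K₂
  else if (i - (q - 3 * p - 2)) % 3 = 0 then L
  else if (i - (q - 3 * p - 2)) % 3 = 1 then J
  else K₁

variable {J K₁ K₂ L p q}

theorem passLoop_mem {S : Set (Set α)} (hJ : J ∈ S) (hK₁ : K₁ ∈ S) (hK₂ : K₂ ∈ S) (hL : L ∈ S)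
    (i : ℕ) : passLoop J K₁ K₂ L p q i ∈ S := by
  unfold passLoop
  split_ifs <;> assumption

theorem surjOn_passLoop {f : α → α} (hJJ : SurjOn f J J) (hJK₁ : SurjOn f J K₁)
    (hJK₂ : SurjOn f J K₂) (hK₁L : SurjOn f K₁ L) (hK₂L : SurjOn f K₂ L) (hLJ : SurjOn f L J)
    (hq : 3 * p + 3 ≤ q) {i : ℕ} (hi : i < q) :
    SurjOn f (passLoop J K₁ K₂ L p q i) (passLoop J K₁ K₂ L p q ((i + 1) % q)) := by
  rw [Nat.add_one_mod_of_lt hi]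
  unfold passLoop
  split_ifs <;> first | assumption | omega

end PassLoop

section DivergentCycle

variable {f : ℝ → ℝ} {a b c x y z : ℝ}

theorem exists_divergent_points (hf : Continuous f) (hxy : x < y) (hyz : y < z)
    (h1 : f x < x) (h2 : z ≤ f y) (h3 : f z ≤ x) :
    ∃ a b c : ℝ, x < a ∧ a < y ∧ f a = a ∧ y < b ∧ b < z ∧ f b = b ∧
      a < c ∧ c < y ∧ f c = b := by
  have hg : Continuous fun t ↦ f t - t := hf.sub continuous_id
  obtain ⟨a, ⟨hxa, hay⟩, hfa⟩ := intermediate_value_Ioo hxy.le hg.continuousOn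
    (show (0 : ℝ) ∈ Ioo (f x - x) (f y - y) by constructor <;> linarith)
  obtain ⟨b, ⟨hyb, hbz⟩, hfb⟩ := intermediate_value_Ioo' hyz.le hg.continuousOn
    (show (0 : ℝ) ∈ Ioo (f z - z) (f y - y) by constructor <;> linarith)
  have hfa : f a = a := sub_eq_zero.1 hfa
  have hfb : f b = b := sub_eq_zero.1 hfb
  obtain ⟨c, ⟨hac, hcy⟩, hfc⟩ := intermediate_value_Ioo hay.le hf.continuousOn
    (show b ∈ Ioo (f a) (f y) by constructor <;> linarith)
  exact ⟨a, b, c, hxa, hay, hfa, hyb, hbz, hfb, hac, hcy, hfc⟩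

theorem exists_isPeriodicPt_passLoop (hf : Continuous f) (hac : a < c) (hcy : c < y)
    (hyb : y < b) (hbz : b < z) (hJ : SurjOn f (Icc a c) (Icc a b))
    (hK₁ : SurjOn f (Icc c y) (Icc b z)) (hK₂ : SurjOn f (Icc y b) (Icc b z))
    (hL : SurjOn f (Icc b z) (Icc a b)) {p q : ℕ} (hq : 3 * p + 3 ≤ q) :
    ∃ w, IsPeriodicPt f q w ∧
      ∀ i < q, f^[i] w ∈ passLoop (Icc a c) (Icc c y) (Icc y b) (Icc b z) p q i := by
  have hJ_sub : Icc a c ⊆ Icc a b := Icc_subset_Icc_right (by linarith)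
  have hK₁_sub : Icc c y ⊆ Icc a b := Icc_subset_Icc hac.le hyb.le
  have hK₂_sub : Icc y b ⊆ Icc a b := Icc_subset_Icc_left (hac.trans hcy).le
  exact exists_isPeriodicPt_of_surjOn_cycle hf
    (passLoop_mem (S := {s | ∃ u v, u ≤ v ∧ s = Icc u v}) ⟨a, c, hac.le, rfl⟩
      ⟨c, y, hcy.le, rfl⟩ ⟨y, b, hyb.le, rfl⟩ ⟨b, z, hbz.le, rfl⟩)
    fun i hi ↦ surjOn_passLoop (hJ.mono subset_rfl hJ_sub) (hJ.mono subset_rfl hK₁_sub)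
      (hJ.mono subset_rfl hK₂_sub) hK₁ hK₂ (hL.mono subset_rfl hJ_sub) hq hi

theorem exists_isPeriodicPt_of_exact_period (hf : Continuous f) (hac : a < c) (hcy : c < y)
    (hyb : y < b) (hbz : b < z) (hJ : SurjOn f (Icc a c) (Icc a b))
    (hK₁ : SurjOn f (Icc c y) (Icc b z)) (hL : SurjOn f (Icc b z) (Icc a b)) {n : ℕ} (hn : 2 ≤ n) :
    ∃ w, IsPeriodicPt f n w ∧ ∀ m, 0 < m → m < n → ¬IsPeriodicPt f m w := by
  let I : ℕ → Set ℝ := fun i ↦ if i = 0 then Icc c y else if i = 1 then Icc b z else Icc a c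
  have hJ_sub : Icc a c ⊆ Icc a b := Icc_subset_Icc_right (by linarith)
  have hK₁_sub : Icc c y ⊆ Icc a b := Icc_subset_Icc hac.le hyb.le
  have hJJ : SurjOn f (Icc a c) (Icc a c) := hJ.mono subset_rfl hJ_sub
  have hJK₁ : SurjOn f (Icc a c) (Icc c y) := hJ.mono subset_rfl hK₁_sub
  have hLJ : SurjOn f (Icc b z) (Icc a c) := hL.mono subset_rfl hJ_sub
  have hLK₁ : SurjOn f (Icc b z) (Icc c y) := hL.mono subset_rfl hK₁_sub
  have hcov : ∀ i < n, SurjOn f (I i) (I ((i + 1) % n)) := by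
    intro i hi
    rw [Nat.add_one_mod_of_lt hi]
    simp only [I]
    split_ifs <;> first | assumption | omega | contradiction
  obtain ⟨w, hw, hit⟩ := exists_isPeriodicPt_of_surjOn_cycle hf (I := I)
    (fun i ↦ by simp only [I]; split_ifs <;> exact ⟨_, _, by linarith, rfl⟩) hcov
  refine ⟨w, hw, fun m hm hmn ↦ iterate_ne_self_of_itinerary hw hit ?_ hm hmn⟩
  intro i _ hi
  refine disjoint_left.2 fun t ht ht' ↦ ?_
  simp only [I, if_neg hi] at ht ht'
  split_ifs at ht' <;> linarith [ht.1, ht'.2]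

end DivergentCycle

theorem stmt11_general (f : ℝ → ℝ) (hf : Continuous f)
    (x y z : ℝ) (hxy : x < y) (hyz : y < z)
    (h1 : f x < x) (h2 : z ≤ f y) (h3 : f z ≤ x) :
    (∀ p q : ℕ, 0 < p → 3 * p + 3 ≤ q →
      ∃ a b c w : ℝ,
        x < a ∧ a < y ∧ f a = a ∧
        y < b ∧ b < z ∧ f b = b ∧
        a < c ∧ c < y ∧ f c = b ∧
        f^[q] w = w ∧
        ∀ i : ℕ, i < q →
          f^[i] w ∈
            (if i < q - 3 * p - 3 then Set.Icc a c
             else if i = q - 3 * p - 3 then Set.Icc y b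
             else if (i - (q - 3 * p - 2)) % 3 = 0 then Set.Icc b z
             else if (i - (q - 3 * p - 2)) % 3 = 1 then Set.Icc a c
             else Set.Icc c y)) ∧
    (∀ n : ℕ, 2 ≤ n → ∃ w : ℝ, f^[n] w = w ∧
      ∀ m : ℕ, 0 < m → m < n → f^[m] w ≠ w) := by
  obtain ⟨a, b, c, hxa, hay, hfa, hyb, hbz, hfb, hac, hcy, hfc⟩ :=
    exists_divergent_points hf hxy hyz h1 h2 h3
  have hJ : SurjOn f (Icc a c) (Icc a b) := surjOn_Icc_of_subset_uIcc hf.continuousOn hac.le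
    (by rw [hfa, hfc, uIcc_of_le (by linarith)])
  have hK₁ : SurjOn f (Icc c y) (Icc b z) := surjOn_Icc_of_subset_uIcc hf.continuousOn hcy.le
    (by rw [hfc]; exact (Icc_subset_Icc_right h2).trans Icc_subset_uIcc)
  have hK₂ : SurjOn f (Icc y b) (Icc b z) := surjOn_Icc_of_subset_uIcc hf.continuousOn hyb.le
    (by rw [hfb]; exact (Icc_subset_Icc_right h2).trans Icc_subset_uIcc')
  have hL : SurjOn f (Icc b z) (Icc a b) := surjOn_Icc_of_subset_uIcc hf.continuousOn hbz.le
    (by rw [hfb]; exact (Icc_subset_Icc_left (by linarith)).trans Icc_subset_uIcc')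
  refine ⟨fun p q _ hq ↦ ?_, fun n hn ↦
    exists_isPeriodicPt_of_exact_period hf hac hcy hyb hbz hJ hK₁ hL hn⟩
  obtain ⟨w, hw, hit⟩ := exists_isPeriodicPt_passLoop hf hac hcy hyb hbz hJ hK₁ hK₂ hL hq
  exact ⟨a, b, c, w, hxa, hay, hfa, hyb, hbz, hfb, hac, hcy, hfc, hw, hit⟩

/-- A divergent cycle configuration (`x < y < z` with `f(x) < x`, `f(y) ≥ z`,
`f(z) ≤ x`) yields, for all positive integers `p, q` with `q ≥ 3p + 3`, a
periodic point of period dividing `q` whose orbit follows the loop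
`J^{q-3p-3} K₂ (L J K₁)^p L J` (thus making exactly `p` passes through the
block `L → J → K₁`); in particular `f` has periodic points of all periods
`n ≥ 2`. -/
theorem stmt11 (f : ℝ → ℝ) (hf : Continuous f)
    (hmaps : Set.MapsTo f (Set.Icc 0 1) (Set.Icc 0 1))
    (x y z : ℝ) (hx : x ∈ Set.Icc (0:ℝ) 1) (hy : y ∈ Set.Icc (0:ℝ) 1)
    (hz : z ∈ Set.Icc (0:ℝ) 1) (hxy : x < y) (hyz : y < z)
    (h1 : f x < x) (h2 : z ≤ f y) (h3 : f z ≤ x) :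
    (∀ p q : ℕ, 0 < p → 3 * p + 3 ≤ q →
      ∃ a b c w : ℝ,
        x < a ∧ a < y ∧ f a = a ∧
        y < b ∧ b < z ∧ f b = b ∧
        a < c ∧ c < y ∧ f c = b ∧
        f^[q] w = w ∧
        ∀ i : ℕ, i < q →
          f^[i] w ∈
            (if i < q - 3 * p - 3 then Set.Icc a c
             else if i = q - 3 * p - 3 then Set.Icc y b
             else if (i - (q - 3 * p - 2)) % 3 = 0 then Set.Icc b z
             else if (i - (q - 3 * p - 2)) % 3 = 1 then Set.Icc a c
             else Set.Icc c y)) ∧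
    (∀ n : ℕ, 2 ≤ n → ∃ w : ℝ, f^[n] w = w ∧
      ∀ m : ℕ, 0 < m → m < n → f^[m] w ≠ w) :=
  stmt11_general f hf x y z hxy hyz h1 h2 h3
end

section
/- Let F : ℝ → ℝ be continuous with F(x+1)=F(x)+1 for all x. Then for every x ∈ ℝ, ρ(F_ℓ) ≤ liminf_{n→∞}(Fⁿ(x)-x)/n and limsup_{n→∞}(Fⁿ(x)-x)/n ≤ ρ(F_u), where F_ℓ(x) = inf{F(y) : y ≥ x}, F_u(x) = sup{F(y) : y ≤ x}, and ρ denotes the rotation number of a nondecreasing degree one lifting. -/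
/-!
The envelopes `F_ℓ ≤ F ≤ F_u` are nondecreasing degree one lifts, so by monotonicity
`F_ℓⁿ ≤ Fⁿ ≤ F_uⁿ` pointwise. For a nondecreasing lift the averages `(gⁿ x - x) / n` converge
to the rotation number independently of `x`, and the orbit averages of `F` are squeezed between
the two limits.
-/

open Filter Set Function Topology

theorem Filter.Tendsto.le_liminf_and_limsup_le_of_le_of_le {ι α : Type*}
    [ConditionallyCompleteLinearOrder α] [TopologicalSpace α] [OrderTopology α]
    {l : Filter ι} [l.NeBot] {u v w : ι → α} {a b : α}
    (hu : Tendsto u l (𝓝 a)) (hw : Tendsto w l (𝓝 b)) (huv : u ≤ v) (hvw : v ≤ w) :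
    a ≤ liminf v l ∧ limsup v l ≤ b := by
  have hv_above : IsBoundedUnder (· ≤ ·) l v :=
    hw.isBoundedUnder_le.mono_le (Eventually.of_forall hvw)
  have hv_below : IsBoundedUnder (· ≥ ·) l v :=
    hu.isBoundedUnder_ge.mono_ge (Eventually.of_forall huv)
  constructor
  · calc a = liminf u l := hu.liminf_eq.symm
      _ ≤ liminf v l := liminf_le_liminf (Eventually.of_forall huv) hu.isBoundedUnder_ge
          hv_above.isCoboundedUnder_ge
  · calc limsup v l ≤ limsup w l := limsup_le_limsup (Eventually.of_forall hvw)
          hv_below.isCoboundedUnder_le hw.isBoundedUnder_le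
      _ = b := hw.limsup_eq

theorem CircleDeg1Lift.tendsto_iterate_sub_div_of_tendsto_iterate_zero_div
    (f : CircleDeg1Lift) {r : ℝ} (hr : Tendsto (fun n : ℕ => f^[n] 0 / n) atTop (𝓝 r)) (x : ℝ) :
    Tendsto (fun n : ℕ => (f^[n] x - x) / n) atTop (𝓝 r) := by
  simp only [← CircleDeg1Lift.coe_pow] at hr ⊢
  rw [tendsto_nhds_unique hr f.tendsto_translation_number₀]
  exact f.tendsto_translationNumber x

section Envelopes

variable {F : ℝ → ℝ}

theorem periodic_sub_self_of_map_add_one (hdeg : ∀ x, F (x + 1) = F x + 1) :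
    Periodic (fun x => F x - x) 1 :=
  fun x => by simp only [hdeg]; ring

theorem bddBelow_image_Ici (hF : Continuous F) (hdeg : ∀ x, F (x + 1) = F x + 1) (t : ℝ) :
    BddBelow (F '' Ici t) := by
  obtain ⟨m, hm⟩ := ((periodic_sub_self_of_map_add_one hdeg).compact_of_continuous one_ne_zero
    (hF.sub continuous_id)).bddBelow
  refine ⟨t + m, ?_⟩
  rintro _ ⟨y, hy : t ≤ y, rfl⟩
  linarith [hm ⟨y, rfl⟩]

theorem bddAbove_image_Iic (hF : Continuous F) (hdeg : ∀ x, F (x + 1) = F x + 1) (t : ℝ) :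
    BddAbove (F '' Iic t) := by
  obtain ⟨M, hM⟩ := ((periodic_sub_self_of_map_add_one hdeg).compact_of_continuous one_ne_zero
    (hF.sub continuous_id)).bddAbove
  refine ⟨t + M, ?_⟩
  rintro _ ⟨y, hy : y ≤ t, rfl⟩
  linarith [hM ⟨y, rfl⟩]

theorem image_Ici_add_one (hdeg : ∀ x, F (x + 1) = F x + 1) (t : ℝ) :
    F '' Ici (t + 1) = (· + 1) '' (F '' Ici t) := by
  rw [← image_add_const_Ici]
  exact (show Semiconj F (· + 1) (· + 1) from hdeg).set_image (Ici t)

theorem image_Iic_add_one (hdeg : ∀ x, F (x + 1) = F x + 1) (t : ℝ) :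
    F '' Iic (t + 1) = (· + 1) '' (F '' Iic t) := by
  rw [← image_add_const_Iic]
  exact (show Semiconj F (· + 1) (· + 1) from hdeg).set_image (Iic t)

noncomputable def lowerLift (hF : Continuous F) (hdeg : ∀ x, F (x + 1) = F x + 1) :
    CircleDeg1Lift where
  toFun t := sInf (F '' Ici t)
  monotone' _ _ hab := csInf_le_csInf (bddBelow_image_Ici hF hdeg _) (nonempty_Ici.image F)
    (image_mono (Ici_subset_Ici.2 hab))
  map_add_one' t := by
    rw [image_Ici_add_one hdeg]
    exact ((OrderIso.addRight 1).map_csInf' (nonempty_Ici.image F)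
      (bddBelow_image_Ici hF hdeg t)).symm

noncomputable def upperLift (hF : Continuous F) (hdeg : ∀ x, F (x + 1) = F x + 1) :
    CircleDeg1Lift where
  toFun t := sSup (F '' Iic t)
  monotone' _ _ hab := csSup_le_csSup (bddAbove_image_Iic hF hdeg _) (nonempty_Iic.image F)
    (image_mono (Iic_subset_Iic.2 hab))
  map_add_one' t := by
    rw [image_Iic_add_one hdeg]
    exact ((OrderIso.addRight 1).map_csSup' (nonempty_Iic.image F)
      (bddAbove_image_Iic hF hdeg t)).symm

theorem lowerLift_le (hF : Continuous F) (hdeg : ∀ x, F (x + 1) = F x + 1) :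
    ⇑(lowerLift hF hdeg) ≤ F := fun t =>
  csInf_le (bddBelow_image_Ici hF hdeg t) (mem_image_of_mem F self_mem_Ici)

theorem le_upperLift (hF : Continuous F) (hdeg : ∀ x, F (x + 1) = F x + 1) :
    F ≤ ⇑(upperLift hF hdeg) := fun t =>
  le_csSup (bddAbove_image_Iic hF hdeg t) (mem_image_of_mem F self_mem_Iic)

end Envelopes

/-- All pointwise lower and upper rotation numbers of a lifting `F` of a
degree one circle map lie between `ρ(F_ℓ)` and `ρ(F_u)`. -/
theorem stmt19 (F : ℝ → ℝ) (hF : Continuous F)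
    (hdeg : ∀ x : ℝ, F (x + 1) = F x + 1) (rl ru : ℝ)
    (hrl : Filter.Tendsto
      (fun n : ℕ => (fun t : ℝ => sInf (F '' Set.Ici t))^[n] 0 / n)
      Filter.atTop (nhds rl))
    (hru : Filter.Tendsto
      (fun n : ℕ => (fun t : ℝ => sSup (F '' Set.Iic t))^[n] 0 / n)
      Filter.atTop (nhds ru))
    (x : ℝ) :
    rl ≤ Filter.liminf (fun n : ℕ => (F^[n] x - x) / n) Filter.atTop ∧
    Filter.limsup (fun n : ℕ => (F^[n] x - x) / n) Filter.atTop ≤ ru := by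
  have hlower := (lowerLift hF hdeg).tendsto_iterate_sub_div_of_tendsto_iterate_zero_div hrl x
  have hupper := (upperLift hF hdeg).tendsto_iterate_sub_div_of_tendsto_iterate_zero_div hru x
  refine hlower.le_liminf_and_limsup_le_of_le_of_le hupper (fun n => ?_) (fun n => ?_)
  · dsimp only
    gcongr
    exact (lowerLift hF hdeg).monotone.iterate_le_of_le (lowerLift_le hF hdeg) n x
  · dsimp only
    gcongr
    exact (upperLift hF hdeg).monotone.le_iterate_of_le (le_upperLift hF hdeg) n x
end
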